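/- arXiv:math/0609498 — 2 statements merged into one kernel-verified Lean document; each statement's English description precedes it below -/
import Mathlib

section
/- Let $(p_j)$ be a positive non-increasing sequence tending to $0$ and let $k$ be a positive integer. Then the following are equivalent: (a) there is $x_0 > 0$ such that $\#\{j : x/2 < p_j \le x\} \ge k$ for all $0 < x < x_0$; (b) there is $j_0$ such that $p_{j+k} \ge p_j/2$ for all $j \ge j_0$. -/
/-!
Since `p` is non-increasing, the indices `j` with `x/2 < p j ≤ x` form an interval.
If `p (j + k) < p j / 2` with `p j` small, then at `x = 2 p (j + k)` this interval lies strictly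
between `j` and `j + k`, so it has fewer than `k` elements. Conversely, if `p (n + k) ≥ p n / 2`
from some point on, then for small `x`, taking `n` to be the last index with `p n > x`, the
indices `n + 1, …, n + k` all satisfy `x/2 < p i ≤ x`.
-/

open Real Set Filter

/-- Its cardinality is the paper's `Δν(x)`. -/
def dyadicBlock (p : ℕ → ℝ) (x : ℝ) : Set ℕ := {j | x / 2 < p j ∧ p j ≤ x}

section

variable {p : ℕ → ℝ} {x : ℝ}

lemma dyadicBlock_subset_Ioo (hp : Antitone p) {j m : ℕ} (hj : x < p j) (hm : p m ≤ x / 2) :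
    dyadicBlock p x ⊆ Ioo j m := by
  rintro i ⟨hlo, hhi⟩
  exact ⟨hp.reflect_lt (hhi.trans_lt hj), hp.reflect_lt (hm.trans_lt hlo)⟩

lemma Icc_subset_dyadicBlock (hp : Antitone p) {j m : ℕ} (hj : p j ≤ x) (hm : x / 2 < p m) :
    Icc j m ⊆ dyadicBlock p x :=
  fun _ ⟨hji, him⟩ => ⟨hm.trans_le (hp him), (hp hji).trans hj⟩

lemma dyadicBlock_finite (hlim : Tendsto p atTop (nhds 0)) (hx : 0 < x) :
    (dyadicBlock p x).Finite := by
  obtain ⟨N, hN⟩ := eventually_atTop.mp (hlim.eventually (gt_mem_nhds (half_pos hx)))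
  refine (finite_Iio N).subset fun i ⟨hlo, _⟩ => ?_
  by_contra hi
  exact (hN i (not_lt.mp hi)).not_gt hlo

lemma ncard_dyadicBlock_lt_of_lt_half (hp : Antitone p) {j k : ℕ} (hk : 0 < k)
    (hgap : p (j + k) < p j / 2) : (dyadicBlock p (2 * p (j + k))).ncard < k := by
  have hsub : dyadicBlock p (2 * p (j + k)) ⊆ Ioo j (j + k) :=
    dyadicBlock_subset_Ioo hp (by linarith) (by linarith)
  calc (dyadicBlock p (2 * p (j + k))).ncard ≤ (Ioo j (j + k)).ncard :=
        ncard_le_ncard hsub (finite_Ioo _ _)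
    _ < k := by rw [Set.ncard_Ioo_nat]; omega

lemma le_ncard_dyadicBlock (hp : Antitone p) (hlim : Tendsto p atTop (nhds 0)) (hx : 0 < x)
    {n k : ℕ} (hn : x < p n) (hn1 : p (n + 1) ≤ x) (hgap : p n / 2 ≤ p (n + k)) :
    k ≤ (dyadicBlock p x).ncard := by
  have hsub : Icc (n + 1) (n + k) ⊆ dyadicBlock p x :=
    Icc_subset_dyadicBlock hp hn1 (by linarith)
  calc k = (Icc (n + 1) (n + k)).ncard := by rw [Set.ncard_Icc_nat]; omega
    _ ≤ (dyadicBlock p x).ncard := ncard_le_ncard hsub (dyadicBlock_finite hlim hx)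

lemma exists_ge_lt_and_succ_le (hlim : Tendsto p atTop (nhds 0)) (hx : 0 < x) {j₀ : ℕ}
    (hj₀ : x < p j₀) : ∃ n, j₀ ≤ n ∧ x < p n ∧ p (n + 1) ≤ x := by
  have hev : ∃ i, p (j₀ + i) ≤ x := by
    obtain ⟨N, hN⟩ := eventually_atTop.mp (hlim.eventually (ge_mem_nhds hx))
    exact ⟨N, hN _ (Nat.le_add_left N j₀)⟩
  obtain ⟨i, hi, hi1⟩ := Nat.exists_not_and_succ_of_not_zero_of_exists
    (p := fun i => p (j₀ + i) ≤ x) (not_le.mpr hj₀) hev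
  exact ⟨j₀ + i, Nat.le_add_right j₀ i, not_le.mp hi, hi1⟩

end

theorem stmt11_general (p : ℕ → ℝ) (hpos : ∀ j, 0 < p j) (hmono : ∀ j, p (j + 1) ≤ p j)
    (hlim : Tendsto p atTop (nhds 0)) (k : ℕ) :
    (∃ x₀ : ℝ, 0 < x₀ ∧ ∀ x : ℝ, 0 < x → x < x₀ →
        k ≤ ({j : ℕ | x / 2 < p j ∧ p j ≤ x}).ncard) ↔
    (∃ j₀ : ℕ, ∀ j : ℕ, j₀ ≤ j → p j / 2 ≤ p (j + k)) := by
  have hp : Antitone p := antitone_nat_of_succ_le hmono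
  constructor
  · rintro ⟨x₀, hx₀, hcount⟩
    obtain ⟨N, hN⟩ := eventually_atTop.mp (hlim.eventually (gt_mem_nhds hx₀))
    refine ⟨N, fun j hj => not_lt.mp fun hgap => ?_⟩
    have hk : 0 < k := Nat.pos_of_ne_zero fun hk0 => by
      rw [hk0, add_zero] at hgap
      linarith [hpos j]
    have hx₀j : 2 * p (j + k) < x₀ := by linarith [hN j hj]
    exact (ncard_dyadicBlock_lt_of_lt_half hp hk hgap).not_ge
      (hcount _ (by linarith [hpos (j + k)]) hx₀j)
  · rintro ⟨j₀, hgap⟩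
    refine ⟨p j₀, hpos j₀, fun x hx hxj₀ => ?_⟩
    obtain ⟨n, hn, hxn, hn1⟩ := exists_ge_lt_and_succ_le hlim hx hxj₀
    exact le_ncard_dyadicBlock hp hlim hx hxn hn1 (hgap n hn)

theorem stmt11 (p : ℕ → ℝ) (hpos : ∀ j, 0 < p j) (hmono : ∀ j, p (j + 1) ≤ p j)
    (hlim : Tendsto p atTop (nhds 0)) (k : ℕ) (hk : 0 < k) :
    (∃ x₀ : ℝ, 0 < x₀ ∧ ∀ x : ℝ, 0 < x → x < x₀ →
        k ≤ ({j : ℕ | x / 2 < p j ∧ p j ≤ x}).ncard) ↔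
    (∃ j₀ : ℕ, ∀ j : ℕ, j₀ ≤ j → p j / 2 ≤ p (j + k)) :=
  stmt11_general p hpos hmono hlim k
end

section
/- Let $(p_j)$ be positive, non-increasing, summable frequencies with $\liminf_{j\to\infty} p_{j+1}/p_j \ge 1/2$. Then $\liminf_{t\to\infty} V(t) \ge 1$, where $V(t) = \sum_j (e^{-tp_j} - e^{-2tp_j})$. -/
/-!
Take the potential `φ(x) = e^{-x} - 2δ e^{-x/2}`. Once `p_j ≤ (2 + δ) p_{j+1}`, each term
`e^{-w} - e^{-2w}` with `w = t p_{j+1}` dominates the increment `φ(t p_{j+1}) - φ(t p_j)`, so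
the sum telescopes to `V(t) ≥ φ(0) - φ(t p_J) ≥ 1 - 2δ - e^{-t p_J}`, which tends to `1 - 2δ`.
-/

open Real Filter Topology

lemma exp_neg_sub_exp_neg_le (a b : ℝ) : exp (-a) - exp (-b) ≤ (b - a) * exp (-a) := by
  have hb : exp (-b) = exp (-a) * exp (a - b) := by rw [← exp_add]; ring_nf
  have := mul_le_mul_of_nonneg_left (add_one_le_exp (a - b)) (exp_pos (-a)).le
  nlinarith

lemma exp_neg_two_mul_sub_exp_neg_le {δ w u : ℝ} (hδ : 0 ≤ δ) (hδ2 : δ ≤ 2) (hwu : w ≤ u)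
    (hu : u ≤ (2 + δ) * w) :
    exp (-(2 * w)) - exp (-u) ≤ 2 * δ * (exp (-(w / 2)) - exp (-(u / 2))) := by
  have hw : 0 ≤ w := by nlinarith
  have hhalf : exp (-(u / 2)) ≤ exp (-(w / 2)) := exp_le_exp.mpr (by linarith)
  rcases le_or_gt u (2 * w) with h | h
  · have : exp (-(2 * w)) ≤ exp (-u) := exp_le_exp.mpr (by linarith)
    nlinarith
  · have hmono : exp (-(2 * w)) ≤ exp (-(u / 2)) := exp_le_exp.mpr (by nlinarith)
    calc exp (-(2 * w)) - exp (-u)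
        ≤ (u - 2 * w) * exp (-(2 * w)) := exp_neg_sub_exp_neg_le _ _
      _ ≤ δ * w * exp (-(u / 2)) := by gcongr; nlinarith
      _ ≤ δ * (u - w) * exp (-(u / 2)) := by gcongr; linarith
      _ = 2 * δ * ((u / 2 - w / 2) * exp (-(u / 2))) := by ring
      _ ≤ 2 * δ * (exp (-(w / 2)) - exp (-(u / 2))) := by
        gcongr; linarith [exp_neg_sub_exp_neg_le (u / 2) (w / 2)]

lemma exp_neg_sub_exp_neg_two_mul_nonneg {x : ℝ} (hx : 0 ≤ x) : 0 ≤ exp (-x) - exp (-(2 * x)) :=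
  sub_nonneg.mpr (exp_le_exp.mpr (by linarith))

lemma exp_neg_sub_exp_neg_two_mul_le {x : ℝ} (hx : 0 ≤ x) : exp (-x) - exp (-(2 * x)) ≤ 2 * x := by
  linarith [exp_le_one_iff.mpr (neg_nonpos.mpr hx), add_one_le_exp (-(2 * x))]

lemma summable_exp_neg_sub_exp_neg_two_mul {p : ℕ → ℝ} (hp : ∀ j, 0 ≤ p j) (hsum : Summable p)
    {t : ℝ} (ht : 0 ≤ t) : Summable fun j => exp (-(t * p j)) - exp (-(2 * t * p j)) := by
  refine Summable.of_nonneg_of_le (fun j => ?_) (fun j => ?_) (hsum.mul_left (2 * t))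
  · simpa only [mul_assoc] using exp_neg_sub_exp_neg_two_mul_nonneg (mul_nonneg ht (hp j))
  · simpa only [mul_assoc] using exp_neg_sub_exp_neg_two_mul_le (mul_nonneg ht (hp j))

lemma sub_le_tsum_of_succ_sub_le {a g : ℕ → ℝ} {L : ℝ} {J : ℕ} (ha : ∀ j, 0 ≤ a j)
    (hs : Summable a) (hg : ∀ j ≥ J, g (j + 1) - g j ≤ a (j + 1))
    (hL : Tendsto g atTop (𝓝 L)) : L - g J ≤ ∑' j, a j := by
  have partial_sum : ∀ n ≥ J, g n - g J ≤ ∑ i ∈ Finset.Ico (J + 1) (n + 1), a i := by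
    refine Nat.le_induction (by simp) fun n hn ih => ?_
    rw [Finset.sum_Ico_succ_top (by omega)]
    linarith [hg n hn]
  refine le_of_tendsto (hL.sub_const _) ?_
  filter_upwards [eventually_ge_atTop J] with n hn
  exact (partial_sum n hn).trans (hs.sum_le_tsum _ fun i _ => ha i)

lemma eventually_mul_lt_succ_of_lt_liminf {p : ℕ → ℝ} (hpos : ∀ j, 0 < p j) {c : ℝ}
    (hc : c < liminf (fun j => p (j + 1) / p j) atTop) : ∀ᶠ j in atTop, c * p j < p (j + 1) := by
  have hbdd : IsBoundedUnder (· ≥ ·) atTop fun j => p (j + 1) / p j :=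
    isBoundedUnder_of ⟨0, fun j => (div_pos (hpos _) (hpos _)).le⟩
  filter_upwards [eventually_lt_of_lt_liminf hc hbdd] with j hj
  rwa [lt_div_iff₀ (hpos j)] at hj

lemma one_sub_two_mul_sub_exp_neg_le_tsum {p : ℕ → ℝ} (hp : ∀ j, 0 ≤ p j)
    (hmono : ∀ j, p (j + 1) ≤ p j) (hsum : Summable p) {δ : ℝ} (hδ : 0 ≤ δ) (hδ2 : δ ≤ 2)
    {J : ℕ} (hJ : ∀ j ≥ J, p j ≤ (2 + δ) * p (j + 1)) {t : ℝ} (ht : 0 ≤ t) :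
    1 - 2 * δ - exp (-(t * p J)) ≤ ∑' j, (exp (-(t * p j)) - exp (-(2 * t * p j))) := by
  set φ : ℝ → ℝ := fun x => exp (-x) - 2 * δ * exp (-(x / 2))
  have hφ : Continuous φ := by fun_prop
  have hlim : Tendsto (fun j => φ (t * p j)) atTop (𝓝 (1 - 2 * δ)) := by
    have h0 : Tendsto (fun j => t * p j) atTop (𝓝 0) := by
      simpa using hsum.tendsto_atTop_zero.const_mul t
    simpa [φ, Function.comp_def] using (hφ.tendsto 0).comp h0
  have hstep : ∀ j ≥ J, φ (t * p (j + 1)) - φ (t * p j) ≤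
      exp (-(t * p (j + 1))) - exp (-(2 * t * p (j + 1))) := by
    intro j hj
    have := exp_neg_two_mul_sub_exp_neg_le hδ hδ2 (mul_le_mul_of_nonneg_left (hmono j) ht)
      (by nlinarith [hJ j hj] : t * p j ≤ (2 + δ) * (t * p (j + 1)))
    simp only [φ, mul_assoc] at this ⊢
    linarith
  have hφJ : φ (t * p J) ≤ exp (-(t * p J)) := by
    simp only [φ]; nlinarith [exp_pos (-(t * p J / 2))]
  have hterm (j : ℕ) : 0 ≤ exp (-(t * p j)) - exp (-(2 * t * p j)) := by
    simpa only [mul_assoc] using exp_neg_sub_exp_neg_two_mul_nonneg (mul_nonneg ht (hp j))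
  have := sub_le_tsum_of_succ_sub_le hterm (summable_exp_neg_sub_exp_neg_two_mul hp hsum ht)
    hstep hlim
  linarith

lemma EReal.coe_le_liminf_coe_of_forall_lt {α : Type*} {l : Filter α} {f : α → ℝ} {c : ℝ}
    (h : ∀ r < c, ∀ᶠ x in l, r < f x) : (c : EReal) ≤ liminf (fun x => (f x : EReal)) l := by
  refine le_of_forall_lt_imp_le_of_dense fun b hb => ?_
  obtain ⟨r, hbr, hrc⟩ := EReal.exists_between_coe_real hb
  refine hbr.le.trans (le_liminf_of_le (by isBoundedDefault) ?_)
  filter_upwards [h r (EReal.coe_lt_coe_iff.mp hrc)] with x hx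
  exact EReal.coe_le_coe_iff.mpr hx.le

theorem stmt13 (p : ℕ → ℝ) (hpos : ∀ j, 0 < p j) (hmono : ∀ j, p (j + 1) ≤ p j)
    (hsum : Summable p)
    (hratio : (1 : ℝ) / 2 ≤ Filter.liminf (fun j : ℕ => p (j + 1) / p j) atTop)
    (V : ℝ → ℝ)
    (hV : ∀ t : ℝ, V t = ∑' j : ℕ, (Real.exp (-(t * p j)) - Real.exp (-(2 * t * p j)))) :
    (1 : EReal) ≤ Filter.liminf (fun t : ℝ => ((V t : ℝ) : EReal)) atTop := by
  refine EReal.coe_le_liminf_coe_of_forall_lt fun r hr => ?_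
  set δ := min 2 ((1 - r) / 8)
  have hδ : 0 < δ := lt_min two_pos (by linarith)
  have hδr : 2 * δ < (1 - r) / 2 := by linarith [min_le_right 2 ((1 - r) / 8)]
  have hinv : (2 + δ)⁻¹ < liminf (fun j => p (j + 1) / p j) atTop :=
    hratio.trans_lt' (by rw [one_div]; gcongr; linarith)
  obtain ⟨J, hJ⟩ := (eventually_mul_lt_succ_of_lt_liminf hpos hinv).exists_forall_of_atTop
  have hJ' : ∀ j ≥ J, p j ≤ (2 + δ) * p (j + 1) :=
    fun j hj => ((inv_mul_lt_iff₀ (by linarith)).mp (hJ j hj)).le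
  have hexp : Tendsto (fun t => exp (-(t * p J))) atTop (𝓝 0) :=
    tendsto_exp_atBot.comp (tendsto_neg_atTop_atBot.comp (tendsto_id.atTop_mul_const (hpos J)))
  filter_upwards [hexp.eventually_lt_const (by linarith : (0 : ℝ) < (1 - r) / 2),
    eventually_ge_atTop 0] with t hsmall ht
  have := one_sub_two_mul_sub_exp_neg_le_tsum (fun j => (hpos j).le) hmono hsum hδ.le
    (min_le_left _ _) hJ' ht
  rw [hV]
  linarith
end
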